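/- Let M be an invertible d×d complex matrix with M M⁺ real (i.e. equal to its entrywise conjugate) and set N = (−1)^d M̄⁻¹ M. Then N = Nᵀ, and consequently N is unitary. -/
import Mathlib


open Matrix

/-- Let `M` be an invertible `d×d` complex matrix with `M M⁺` real (equal to its
entrywise conjugate), and set `N = (−1)^d M̄⁻¹ M`.  Then `N = Nᵀ`, and consequently
`N` is unitary. -/
theorem stmt6 (d : ℕ) (M : Matrix (Fin d) (Fin d) ℂ) (hM : IsUnit M.det)
    (hreal : M * Mᴴ = (M * Mᴴ).map (starRingEnd ℂ)) :
    ((-1 : ℂ) ^ d • ((M.map (starRingEnd ℂ))⁻¹ * M))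
        = ((-1 : ℂ) ^ d • ((M.map (starRingEnd ℂ))⁻¹ * M))ᵀ ∧
    ((-1 : ℂ) ^ d • ((M.map (starRingEnd ℂ))⁻¹ * M)) ∈ Matrix.unitaryGroup (Fin d) ℂ := by
  set c := starRingEnd ℂ with hc
  have hmapmap : ∀ A : Matrix (Fin d) (Fin d) ℂ, (A.map c).map c = A := by
    intro A; ext i j; simp [Matrix.map_apply, hc]
  have hMc : IsUnit (M.map ⇑c).det := by
    rw [show M.map ⇑c = c.mapMatrix M from rfl, ← RingHom.map_det]
    exact hM.map c
  haveI : Invertible (M.map ⇑c) := (M.map ⇑c).invertibleOfIsUnitDet hMc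
  have hMcT : IsUnit (M.map ⇑c)ᵀ.det := by rwa [Matrix.det_transpose]
  have hMT : IsUnit Mᵀ.det := by rwa [Matrix.det_transpose]
  have hH : Mᴴ = Mᵀ.map ⇑c := rfl
  have key : M * Mᵀ.map ⇑c = M.map ⇑c * Mᵀ := by
    have h := hreal
    rw [hH, Matrix.map_mul, hmapmap] at h
    exact h
  have key2 : M * (M.map ⇑c)ᵀ = M.map ⇑c * Mᵀ := by
    rwa [Matrix.transpose_map] at key
  have hsym : (M.map ⇑c)⁻¹ * M = ((M.map ⇑c)⁻¹ * M)ᵀ := by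
    rw [Matrix.transpose_mul, Matrix.transpose_nonsing_inv,
      Matrix.inv_mul_eq_iff_eq_mul_of_invertible, ← Matrix.mul_assoc, ← key2,
      Matrix.mul_nonsing_inv_cancel_right _ _ hMcT]
  refine ⟨by rw [Matrix.transpose_smul, ← hsym], ?_⟩
  rw [Matrix.mem_unitaryGroup_iff]
  have hMcH : (M.map ⇑c)ᴴ = Mᵀ := by
    ext i j
    simp [Matrix.conjTranspose_apply, Matrix.map_apply, hc]
  have hstar : star ((-1 : ℂ) ^ d • ((M.map ⇑c)⁻¹ * M))
      = (-1 : ℂ) ^ d • (Mᴴ * (Mᵀ)⁻¹) := by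
    rw [star_smul]
    congr 1
    · simp
    · show ((M.map ⇑c)⁻¹ * M)ᴴ = Mᴴ * (Mᵀ)⁻¹
      rw [Matrix.conjTranspose_mul, Matrix.conjTranspose_nonsing_inv, hMcH]
  rw [hstar, smul_mul_smul_comm, ← pow_add, ← two_mul, pow_mul, neg_one_sq, one_pow,
    one_smul, Matrix.mul_assoc, ← Matrix.mul_assoc M, hH, key,
    Matrix.mul_assoc (M.map ⇑c), Matrix.mul_nonsing_inv _ hMT, Matrix.mul_one,
    Matrix.nonsing_inv_mul _ hMc]
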